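/- arXiv:1704.01310 — 8 statements merged into one kernel-verified Lean document; each statement's English description precedes it below -/
import Mathlib

section
/- Let κ, μ, a be real numbers with κ < 1 and a > 0, and set κ̄ := (κ + a² − 1)/a² and μ̄ := (μ + 2a − 2)/a. Then κ̄ < 1 and (1 − μ̄/2)/√(1 − κ̄) = (1 − μ/2)/√(1 − κ). -/
/-! A `D_a`-homothetic deformation divides both `1 - κ` by `a ^ 2` and `1 - μ / 2` by `a`;
since `a > 0`, the square root in the Boeckx invariant turns the first factor into `a` as
well, and the two cancel. -/

lemma one_sub_dHomothetic_kappa {κ a : ℝ} (ha : a ≠ 0) :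
    1 - (κ + a ^ 2 - 1) / a ^ 2 = (1 - κ) / a ^ 2 := by
  field_simp
  ring

lemma one_sub_half_dHomothetic_mu {μ a : ℝ} (ha : a ≠ 0) :
    1 - (μ + 2 * a - 2) / a / 2 = (1 - μ / 2) / a := by
  field_simp
  ring

lemma div_div_sqrt_div_sq {x y a : ℝ} (ha : 0 < a) :
    x / a / √(y / a ^ 2) = x / √y := by
  rw [Real.sqrt_div' y (sq_nonneg a), Real.sqrt_sq ha.le, div_div_div_cancel_right₀ ha.ne']

theorem boeckx_invariant_D_homothetic_invariance
    (κ μ a : ℝ) (hκ : κ < 1) (ha : 0 < a)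
    (κbar μbar : ℝ)
    (hκbar : κbar = (κ + a ^ 2 - 1) / a ^ 2)
    (hμbar : μbar = (μ + 2 * a - 2) / a) :
    κbar < 1 ∧
      (1 - μbar / 2) / Real.sqrt (1 - κbar) = (1 - μ / 2) / Real.sqrt (1 - κ) := by
  subst hκbar hμbar
  have hκbar_sub : 1 - (κ + a ^ 2 - 1) / a ^ 2 = (1 - κ) / a ^ 2 :=
    one_sub_dHomothetic_kappa ha.ne'
  refine ⟨?_, ?_⟩
  · have : 0 < (1 - κ) / a ^ 2 := div_pos (sub_pos.mpr hκ) (by positivity)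
    linarith
  · rw [hκbar_sub, one_sub_half_dHomothetic_mu ha.ne', div_div_sqrt_div_sq ha]
end

section
/- Let E be a real inner product space and define the trilinear map T : E × E × E → E by T(x,y)z := ⟨x,z⟩y − ⟨x,y⟩z − ⟨y,z⟩x. Then T is a Jordan triple product, i.e., it satisfies (JT1) T(x,y)z = T(z,y)x for all x,y,z ∈ E, and (JT2) T(u,v)(T(x,y)z) = T(T(u,v)x, y)z − T(x, T(v,u)y)z + T(x,y)(T(u,v)z) for all u,v,x,y,z ∈ E. -/
open scoped RealInnerProductSpace

namespace InnerProductSpace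

variable {E : Type*} [NormedAddCommGroup E] [InnerProductSpace ℝ E]

def sphereTriple (x y z : E) : E := ⟪x, z⟫ • y - ⟪x, y⟫ • z - ⟪y, z⟫ • x

theorem sphereTriple_comm (x y z : E) : sphereTriple x y z = sphereTriple z y x := by
  simp only [sphereTriple, real_inner_comm z x, real_inner_comm z y, real_inner_comm y x]
  module

theorem sphereTriple_sphereTriple (u v x y z : E) :
    sphereTriple u v (sphereTriple x y z) =
      sphereTriple (sphereTriple u v x) y z - sphereTriple x (sphereTriple v u y) z +
        sphereTriple x y (sphereTriple u v z) := by
  -- Orient every inner product along `u, v, x, y, z` so that `module` can compare coefficients.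
  simp only [sphereTriple, inner_sub_left, inner_sub_right, real_inner_smul_left,
    real_inner_smul_right, smul_sub, sub_smul, smul_smul,
    real_inner_comm v u, real_inner_comm x u, real_inner_comm x v, real_inner_comm y u,
    real_inner_comm y v, real_inner_comm y x, real_inner_comm z u, real_inner_comm z v,
    real_inner_comm z x, real_inner_comm z y]
  module

end InnerProductSpace

open InnerProductSpace in
/-- The map `T(x,y)z = ⟨x,z⟩y − ⟨x,y⟩z − ⟨y,z⟩x` on a real inner product space
is a Jordan triple product. -/
theorem sphere_jordan_extension_is_jordan_triple
    (E : Type*) [NormedAddCommGroup E] [InnerProductSpace ℝ E]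
    (T : E → E → E → E)
    (hT : ∀ x y z : E, T x y z = ⟪x, z⟫ • y - ⟪x, y⟫ • z - ⟪y, z⟫ • x) :
    (∀ x y z : E, T x y z = T z y x) ∧
    (∀ u v x y z : E,
      T u v (T x y z) = T (T u v x) y z - T x (T v u y) z + T x y (T u v z)) := by
  obtain rfl : T = sphereTriple := funext₃ hT
  exact ⟨sphereTriple_comm, sphereTriple_sphereTriple⟩
end

section
/- Fix n ≥ 1 and α > 0. In real (2+n)×(2+n) matrices in 2+n block form, let ξ := fromBlocks S 0 0 0 where S := [[0,−1],[1,0]], and for v,w ∈ ℝⁿ let B(v,w) := fromBlocks 0 (−C(v,w)ᵀ) C(v,w) 0, where C(v,w) is the n×2 matrix with columns v and w. Then for all v,w ∈ ℝⁿ, with respect to the matrix commutator: (i) [ξ, B(v,w)] = B(−w, v); (ii) [ξ, B(−(1/α)w, αv)] − B(−(1/α)v, −αw) = ((1−α²)/α)·B(v, −w). In particular the left-hand side of (ii) vanishes for all v,w ∈ ℝⁿ if and only if α = 1. -/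
/-!
In block form `ξ` only sees the `2×2` corner `S`, so `[ξ, B(v,w)]` is computed from
`C(v,w) S = C(w,-v)` and `S C(v,w)ᵀ = C(-w,v)ᵀ`: right multiplication by `S` rotates the pair of
columns. Identity (ii) then follows from linearity of `B`, and since `B` is injective and
`ℝⁿ ≠ 0`, its left side vanishes identically iff `(1 - α²)/α = 0`, i.e. `α = 1` for `α > 0`.
-/

open Matrix

/-- The matrix `ξ = fromBlocks S 0 0 0` with `S = [[0,−1],[1,0]]`. -/
noncomputable def xiMat (n : ℕ) : Matrix (Fin 2 ⊕ Fin n) (Fin 2 ⊕ Fin n) ℝ :=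
  fromBlocks !![(0 : ℝ), -1; 1, 0] 0 0 0

/-- The `n×2` matrix with columns `v` and `w`. -/
def colMat (n : ℕ) (v w : Fin n → ℝ) : Matrix (Fin n) (Fin 2) ℝ :=
  Matrix.of fun i j => ![v i, w i] j

/-- The matrix `B(v,w) = fromBlocks 0 (−C(v,w)ᵀ) (C(v,w)) 0`. -/
noncomputable def BMat (n : ℕ) (v w : Fin n → ℝ) :
    Matrix (Fin 2 ⊕ Fin n) (Fin 2 ⊕ Fin n) ℝ :=
  fromBlocks 0 (-(colMat n v w)ᵀ) (colMat n v w) 0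

lemma colMat_sub (n : ℕ) (v w v' w' : Fin n → ℝ) :
    colMat n v w - colMat n v' w' = colMat n (v - v') (w - w') := by
  ext i j
  fin_cases j <;> rfl

lemma colMat_neg (n : ℕ) (v w : Fin n → ℝ) : -colMat n v w = colMat n (-v) (-w) := by
  ext i j
  fin_cases j <;> rfl

lemma colMat_smul (n : ℕ) (c : ℝ) (v w : Fin n → ℝ) :
    c • colMat n v w = colMat n (c • v) (c • w) := by
  ext i j
  fin_cases j <;> rfl

lemma colMat_eq_zero_iff (n : ℕ) (v w : Fin n → ℝ) :
    colMat n v w = 0 ↔ v = 0 ∧ w = 0 := by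
  refine ⟨fun h => ⟨funext fun i => congrFun (congrFun h i) 0,
    funext fun i => congrFun (congrFun h i) 1⟩, ?_⟩
  rintro ⟨rfl, rfl⟩
  ext i j
  fin_cases j <;> rfl

lemma colMat_mul_rotation (n : ℕ) (v w : Fin n → ℝ) :
    colMat n v w * !![(0 : ℝ), -1; 1, 0] = colMat n w (-v) := by
  ext i j
  fin_cases j <;> simp [colMat, Matrix.mul_apply, Fin.sum_univ_two]

lemma rotation_mul_transpose_colMat (n : ℕ) (v w : Fin n → ℝ) :
    !![(0 : ℝ), -1; 1, 0] * (colMat n v w)ᵀ = (colMat n (-w) v)ᵀ := by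
  ext i j
  fin_cases i <;> simp [colMat, Matrix.mul_apply, Fin.sum_univ_two]

lemma BMat_sub (n : ℕ) (v w v' w' : Fin n → ℝ) :
    BMat n v w - BMat n v' w' = BMat n (v - v') (w - w') := by
  rw [BMat, BMat, BMat, ← colMat_sub]
  ext (i | i) (j | j) <;> simp [fromBlocks, neg_add_eq_sub]

lemma BMat_smul (n : ℕ) (c : ℝ) (v w : Fin n → ℝ) :
    c • BMat n v w = BMat n (c • v) (c • w) := by
  simp only [BMat, fromBlocks_smul, smul_zero, smul_neg, ← transpose_smul, colMat_smul]

lemma BMat_eq_zero_iff (n : ℕ) (v w : Fin n → ℝ) :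
    BMat n v w = 0 ↔ v = 0 ∧ w = 0 := by
  rw [BMat, ← fromBlocks_zero, fromBlocks_inj, ← colMat_eq_zero_iff]
  constructor
  · exact fun h => h.2.2.1
  · intro h
    simp [h]

lemma xiMat_mul_sub_mul_xiMat (n : ℕ) (v w : Fin n → ℝ) :
    xiMat n * BMat n v w - BMat n v w * xiMat n = BMat n (-w) v := by
  simp only [xiMat, BMat, fromBlocks_multiply, Matrix.mul_zero, Matrix.zero_mul, Matrix.mul_neg,
    add_zero, neg_zero, rotation_mul_transpose_colMat, colMat_mul_rotation]
  rw [sub_eq_add_neg, fromBlocks_neg, fromBlocks_add, colMat_neg, neg_neg]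
  simp

lemma xiMat_commutator_scaled_sub (n : ℕ) {α : ℝ} (hα : α ≠ 0) (v w : Fin n → ℝ) :
    (xiMat n * BMat n (-((1 / α) • w)) (α • v) -
        BMat n (-((1 / α) • w)) (α • v) * xiMat n) -
        BMat n (-((1 / α) • v)) (-(α • w)) =
      ((1 - α ^ 2) / α) • BMat n v (-w) := by
  rw [xiMat_mul_sub_mul_xiMat, BMat_sub, BMat_smul]
  congr 1 <;> ext i <;> simp <;> field_simp <;> ring

lemma one_sub_sq_div_eq_zero_iff {α : ℝ} (hα : 0 < α) : (1 - α ^ 2) / α = 0 ↔ α = 1 := by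
  rw [div_eq_zero_iff, sub_eq_zero, eq_comm, pow_eq_one_iff_of_nonneg hα.le two_ne_zero]
  simp [hα.ne']

/-- Computation of `2h = L_ξ φ` on `SO(n+2)/SO(n)`: the structure is
`K`-contact iff `α = 1`. -/
theorem h_tensor_so_n_plus_two (n : ℕ) (hn : 1 ≤ n) (α : ℝ) (hα : 0 < α) :
    (∀ v w : Fin n → ℝ,
      xiMat n * BMat n v w - BMat n v w * xiMat n = BMat n (-w) v) ∧
    (∀ v w : Fin n → ℝ,
      (xiMat n * BMat n (-((1 / α) • w)) (α • v) -
        BMat n (-((1 / α) • w)) (α • v) * xiMat n) -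
        BMat n (-((1 / α) • v)) (-(α • w)) =
      ((1 - α ^ 2) / α) • BMat n v (-w)) ∧
    ((∀ v w : Fin n → ℝ,
      (xiMat n * BMat n (-((1 / α) • w)) (α • v) -
        BMat n (-((1 / α) • w)) (α • v) * xiMat n) -
        BMat n (-((1 / α) • v)) (-(α • w)) = 0) ↔ α = 1) := by
  refine ⟨xiMat_mul_sub_mul_xiMat n, xiMat_commutator_scaled_sub n hα.ne', ?_⟩
  simp only [xiMat_commutator_scaled_sub n hα.ne', smul_eq_zero, BMat_eq_zero_iff, neg_eq_zero,
    one_sub_sq_div_eq_zero_iff hα]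
  refine ⟨fun h => ?_, fun h _ _ => Or.inl h⟩
  have hne : (fun _ => 1 : Fin n → ℝ) ≠ 0 := fun h0 => one_ne_zero (congrFun h0 ⟨0, hn⟩)
  simpa [hne] using h (fun _ => 1) 0
end

section
/- Let λ > 0 and μ ∈ ℝ, and set I := (1 − μ/2)/λ. Then there exists a > 0 with a²(2 − μ − 2λ) = 2 − μ + 2λ if and only if |I| > 1; moreover, in that case such a is unique and equals √((I+1)/(I−1)). -/
/-!
Dividing by `2λ` turns the equation into `a² (I - 1) = I + 1`. For `a > 0` this forces `I ≠ 1` and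
`a² = (I + 1)/(I - 1)`, and this quotient is positive exactly when `I + 1` and `I - 1` have the same
sign, i.e. when `|I| > 1`; the positive solution is then its square root.
-/

lemma one_lt_abs_iff_div_pos (I : ℝ) : 1 < |I| ↔ 0 < (I + 1) / (I - 1) := by
  rw [lt_abs, div_pos_iff]
  constructor
  · rintro (h | h)
    · exact Or.inl ⟨by linarith, by linarith⟩
    · exact Or.inr ⟨by linarith, by linarith⟩
  · rintro (⟨_, h⟩ | ⟨h, _⟩)
    · exact Or.inl (by linarith)
    · exact Or.inr (by linarith)

lemma sq_mul_sub_one_eq_add_one_iff {I a : ℝ} (ha : a ≠ 0) :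
    a ^ 2 * (I - 1) = I + 1 ↔ a ^ 2 = (I + 1) / (I - 1) := by
  rcases eq_or_ne I 1 with rfl | hI
  · norm_num [ha]
  · rw [eq_div_iff (sub_ne_zero.mpr hI)]

lemma exists_pos_sq_eq_iff (q : ℝ) : (∃ a : ℝ, 0 < a ∧ a ^ 2 = q) ↔ 0 < q := by
  constructor
  · rintro ⟨a, ha, rfl⟩
    positivity
  · intro hq
    exact ⟨√q, Real.sqrt_pos.mpr hq, Real.sq_sqrt hq.le⟩

lemma mul_sub_eq_add_iff_boeckx {lam μ : ℝ} (hlam : lam ≠ 0) (x : ℝ) :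
    x * (2 - μ - 2 * lam) = 2 - μ + 2 * lam ↔
      x * ((1 - μ / 2) / lam - 1) = (1 - μ / 2) / lam + 1 := by
  have h2lam : 2 * lam ≠ 0 := mul_ne_zero two_ne_zero hlam
  rw [← mul_right_inj' h2lam]
  constructor <;> intro h <;> field_simp at h ⊢ <;> linarith

theorem standard_complex_structure_parameter
    (lam μ I : ℝ) (hlam : 0 < lam) (hI : I = (1 - μ / 2) / lam) :
    ((∃ a : ℝ, 0 < a ∧ a ^ 2 * (2 - μ - 2 * lam) = 2 - μ + 2 * lam) ↔ 1 < |I|) ∧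
    (∀ a : ℝ, 0 < a → a ^ 2 * (2 - μ - 2 * lam) = 2 - μ + 2 * lam →
      a = Real.sqrt ((I + 1) / (I - 1))) := by
  have hsq : ∀ a : ℝ, 0 < a →
      (a ^ 2 * (2 - μ - 2 * lam) = 2 - μ + 2 * lam ↔ a ^ 2 = (I + 1) / (I - 1)) := by
    intro a ha
    rw [mul_sub_eq_add_iff_boeckx hlam.ne', ← hI, sq_mul_sub_one_eq_add_one_iff ha.ne']
  refine ⟨?_, fun a ha h => ?_⟩
  · rw [one_lt_abs_iff_div_pos, ← exists_pos_sq_eq_iff]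
    exact exists_congr fun a => and_congr_right fun ha => hsq a ha
  · rw [← (hsq a ha).mp h, Real.sqrt_sq ha.le]
end

section
/- Let n ≥ 1, E = ℝⁿ with standard inner product, V = E × E with inner product g((v,w),(u,z)) = ⟨v,u⟩ + ⟨w,z⟩, and for real κ < 1, μ ∈ ℝ, λ := √(1−κ), define φ(v,w) := (−w, v), h(v,w) := (λv, −λw), and the trilinear map R̄ : V×V×V → V by R̄(X,Y)Z = ((1−μ/2)g(Y,Z)+g(hY,Z))X − ((1−μ/2)g(X,Z)+g(hX,Z))Y + (((1−μ/2)/(1−κ))g(hY,Z)+g(Y,Z))hX − (((1−μ/2)/(1−κ))g(hX,Z)+g(X,Z))hY + ((1−μ/2)g(φY,Z)+g(φhY,Z))φX − ((1−μ/2)g(φX,Z)+g(φhX,Z))φY + (((1−μ/2)/(1−κ))g(φhY,Z)+g(φY,Z))φhX − (((1−μ/2)/(1−κ))g(φhX,Z)+g(φX,Z))φhY + (μ−2)g(φX,Y)φZ − 2g(φX,Y)φhZ. Then the linear map τ := (1/λ)·h, i.e. τ(v,w) = (v,−w), satisfies τ∘τ = id and R̄(τX, τY)(τZ) = τ(R̄(X,Y)Z)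 for all X,Y,Z ∈ V. -/
open scoped RealInnerProductSpace

/-- The model vector space `V = ℝⁿ × ℝⁿ` for the tangent space of the base
space of the canonical fibration. -/
abbrev modelV (n : ℕ) := EuclideanSpace ℝ (Fin n) × EuclideanSpace ℝ (Fin n)

/-- The inner product `g((v,w),(u,z)) = ⟨v,u⟩ + ⟨w,z⟩` on `V = ℝⁿ × ℝⁿ`. -/
noncomputable def gV (n : ℕ) (X Y : modelV n) : ℝ :=
  ⟪X.1, Y.1⟫ + ⟪X.2, Y.2⟫

/-- The tensor `φ(v,w) = (−w, v)` on `V = ℝⁿ × ℝⁿ`. -/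
def phiV (n : ℕ) (X : modelV n) : modelV n := (-X.2, X.1)

/-- The tensor `h(v,w) = (λv, −λw)` on `V = ℝⁿ × ℝⁿ`, `λ = √(1−κ)`. -/
noncomputable def hV (n : ℕ) (κ : ℝ) (X : modelV n) : modelV n :=
  (Real.sqrt (1 - κ) • X.1, -(Real.sqrt (1 - κ) • X.2))

/-- The curvature tensor of the canonical connection of the base space of the
canonical fibration of a non-Sasakian contact metric `(κ,μ)`-space, realized
on the model `V = ℝⁿ × ℝⁿ`. -/
noncomputable def Rbar (n : ℕ) (κ μ : ℝ) (X Y Z : modelV n) : modelV n :=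
  ((1 - μ / 2) * gV n Y Z + gV n (hV n κ Y) Z) • X
  - ((1 - μ / 2) * gV n X Z + gV n (hV n κ X) Z) • Y
  + (((1 - μ / 2) / (1 - κ)) * gV n (hV n κ Y) Z + gV n Y Z) • hV n κ X
  - (((1 - μ / 2) / (1 - κ)) * gV n (hV n κ X) Z + gV n X Z) • hV n κ Y
  + ((1 - μ / 2) * gV n (phiV n Y) Z + gV n (phiV n (hV n κ Y)) Z) • phiV n X
  - ((1 - μ / 2) * gV n (phiV n X) Z + gV n (phiV n (hV n κ X)) Z) • phiV n Y
  + (((1 - μ / 2) / (1 - κ)) * gV n (phiV n (hV n κ Y)) Z + gV n (phiV n Y) Z)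
      • phiV n (hV n κ X)
  - (((1 - μ / 2) / (1 - κ)) * gV n (phiV n (hV n κ X)) Z + gV n (phiV n X) Z)
      • phiV n (hV n κ Y)
  + ((μ - 2) * gV n (phiV n X) Y) • phiV n Z
  - (2 * gV n (phiV n X) Y) • phiV n (hV n κ Z)

lemma gV_smul_left (n : ℕ) (c : ℝ) (X Y : modelV n) : gV n (c • X) Y = c * gV n X Y := by
  simp only [gV, Prod.smul_fst, Prod.smul_snd, real_inner_smul_left, mul_add]

/-- Every coefficient of `R̄` containing `φ` multiplies a vector containing `φ`, so the two
signs `ε` cancel. -/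
theorem Rbar_map_eq_map_Rbar (n : ℕ) (κ μ ε : ℝ) (hε : ε * ε = 1)
    (T : modelV n →ₗ[ℝ] modelV n) (hg : ∀ X Y, gV n (T X) (T Y) = gV n X Y)
    (hh : ∀ X, hV n κ (T X) = T (hV n κ X)) (hφ : ∀ X, phiV n (T X) = ε • T (phiV n X))
    (X Y Z : modelV n) : Rbar n κ μ (T X) (T Y) (T Z) = T (Rbar n κ μ X Y Z) := by
  simp only [Rbar, hh, hφ, gV_smul_left, hg, map_add, map_sub, map_smul, smul_smul]
  match_scalars <;> grind

def tauV (n : ℕ) : modelV n →ₗ[ℝ] modelV n :=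
  LinearMap.prodMap LinearMap.id (-LinearMap.id)

lemma tauV_apply (n : ℕ) (X : modelV n) : tauV n X = (X.1, -X.2) := rfl

lemma tauV_tauV (n : ℕ) (X : modelV n) : tauV n (tauV n X) = X := by
  simp [tauV_apply]

lemma gV_tauV (n : ℕ) (X Y : modelV n) : gV n (tauV n X) (tauV n Y) = gV n X Y := by
  simp [gV, tauV_apply]

lemma hV_tauV (n : ℕ) (κ : ℝ) (X : modelV n) : hV n κ (tauV n X) = tauV n (hV n κ X) := by
  simp [hV, tauV_apply]

lemma phiV_tauV (n : ℕ) (X : modelV n) : phiV n (tauV n X) = -tauV n (phiV n X) := by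
  simp [phiV, tauV_apply]

theorem tau_is_involutive_automorphism_general (n : ℕ) (κ μ : ℝ)
    (τ : modelV n → modelV n) (hτ : ∀ X, τ X = (X.1, -X.2)) :
    (∀ X, τ (τ X) = X) ∧
    (∀ X Y Z, Rbar n κ μ (τ X) (τ Y) (τ Z) = τ (Rbar n κ μ X Y Z)) := by
  obtain rfl : τ = tauV n := funext hτ
  refine ⟨tauV_tauV n, Rbar_map_eq_map_Rbar n κ μ (-1) (by norm_num) (tauV n) (gV_tauV n)
    (hV_tauV n κ) fun X => ?_⟩
  rw [phiV_tauV, neg_one_smul]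

/-- `τ = (1/λ)h : (v,w) ↦ (v,−w)` is an involutive automorphism of the Lie
triple system of the base space. -/
theorem tau_is_involutive_automorphism (n : ℕ) (hn : 1 ≤ n) (κ μ : ℝ) (hκ : κ < 1)
    (τ : modelV n → modelV n) (hτ : ∀ X, τ X = (X.1, -X.2)) :
    (∀ X, τ (τ X) = X) ∧
    (∀ X Y Z, Rbar n κ μ (τ X) (τ Y) (τ Z) = τ (Rbar n κ μ X Y Z)) :=
  tau_is_involutive_automorphism_general n κ μ τ hτ
end

section
/- Let n ≥ 1, E = ℝⁿ with standard inner product, V = E × E with inner product g((v,w),(u,z)) = ⟨v,u⟩ + ⟨w,z⟩, and for real κ < 1, μ ∈ ℝ, λ := √(1−κ), define φ(v,w) := (−w, v), h(v,w) := (λv, −λw), and the trilinear map R̄ : V×V×V → V by R̄(X,Y)Z = ((1−μ/2)g(Y,Z)+g(hY,Z))X − ((1−μ/2)g(X,Z)+g(hX,Z))Y + (((1−μ/2)/(1−κ))g(hY,Z)+g(Y,Z))hX − (((1−μ/2)/(1−κ))g(hX,Z)+g(X,Z))hY + ((1−μ/2)g(φY,Z)+g(φhY,Z))φX − ((1−μ/2)g(φX,Z)+g(φhX,Z))φY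 + (((1−μ/2)/(1−κ))g(φhY,Z)+g(φY,Z))φhX − (((1−μ/2)/(1−κ))g(φhX,Z)+g(φX,Z))φhY + (μ−2)g(φX,Y)φZ − 2g(φX,Y)φhZ. For a > 0 define the linear map J_a on V by J_a(v,w) := (−(1/a)w, a·v). Then R̄(X,Y)(J_a Z) = J_a(R̄(X,Y)Z) holds for all X,Y,Z ∈ V if and only if a²(2 − μ − 2λ) = 2 − μ + 2λ. -/
/-!
Write `X = (X₁, X₂)` along the `±λ`-eigenspaces of `h`. Since `λ² = 1 − κ`, the ten terms of `R̄`
collapse: each component of `R̄(X,Y)Z` is a combination of the two constants `2 − μ ± 2λ`, and the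
`φZ`, `φhZ` terms contribute only `g(φX,Y)`-multiples of `Z₂` and `Z₁`. For
`J(v,w) = (−b w, a v)` everything cancels in `R̄(X,Y)(JZ) − J(R̄(X,Y)Z)` except
`(a(2 − μ − 2λ) − b(2 − μ + 2λ)) g(φX,Y) (Z₁, −Z₂)`, and `g(φX,Y) ≠ 0` for
`X = (e,0)`, `Y = (0,e)`. With `b = 1/a` the vanishing condition is `a²(2−μ−2λ) = 2−μ+2λ`.
-/
open scoped RealInnerProductSpace

/-- `J_{a,b}(v,w) = (−b w, a v)`; the paper's `J_a` is `J_{a,1/a}`. -/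
def scaledPhiV (n : ℕ) (a b : ℝ) (X : modelV n) : modelV n := (-(b • X.2), a • X.1)

section

variable {n : ℕ} {κ : ℝ} (μ : ℝ)

lemma Rbar_eq_mk (hκ : κ < 1) (X Y Z : modelV n) :
    Rbar n κ μ X Y Z =
      ((2 - μ + 2 * √(1 - κ)) • (⟪Y.1, Z.1⟫ • X.1 - ⟪X.1, Z.1⟫ • Y.1)
        + (2 - μ - 2 * √(1 - κ)) •
            (⟪Y.2, Z.1⟫ • X.2 - ⟪X.2, Z.1⟫ • Y.2 + gV n (phiV n X) Y • Z.2),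
       (2 - μ - 2 * √(1 - κ)) • (⟪Y.2, Z.2⟫ • X.2 - ⟪X.2, Z.2⟫ • Y.2)
        + (2 - μ + 2 * √(1 - κ)) •
            (⟪Y.1, Z.2⟫ • X.1 - ⟪X.1, Z.2⟫ • Y.1 - gV n (phiV n X) Y • Z.1)) := by
  have hl : √(1 - κ) ≠ 0 := (Real.sqrt_pos.mpr (sub_pos.mpr hκ)).ne'
  have hl2 := Real.sq_sqrt (sub_pos.mpr hκ).le
  simp only [Rbar, gV, phiV, hV]
  generalize √(1 - κ) = l at hl hl2 ⊢
  rw [← hl2]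
  simp only [real_inner_smul_left, inner_neg_left, Prod.ext_iff, Prod.fst_add, Prod.fst_sub,
    Prod.smul_fst, Prod.snd_add, Prod.snd_sub, Prod.smul_snd]
  constructor <;> match_scalars <;> field_simp <;> ring

lemma Rbar_scaledPhiV_sub_scaledPhiV_Rbar (hκ : κ < 1) (a b : ℝ) (X Y Z : modelV n) :
    Rbar n κ μ X Y (scaledPhiV n a b Z) - scaledPhiV n a b (Rbar n κ μ X Y Z) =
      ((a * (2 - μ - 2 * √(1 - κ)) - b * (2 - μ + 2 * √(1 - κ))) * gV n (phiV n X) Y)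
        • (Z.1, -Z.2) := by
  simp only [Rbar_eq_mk μ hκ, scaledPhiV, real_inner_smul_right, inner_neg_right,
    Prod.mk_sub_mk, Prod.smul_mk]
  congr 1 <;> module

lemma Rbar_comm_scaledPhiV_iff (hn : 1 ≤ n) (hκ : κ < 1) (a b : ℝ) :
    (∀ X Y Z, Rbar n κ μ X Y (scaledPhiV n a b Z) = scaledPhiV n a b (Rbar n κ μ X Y Z)) ↔
      a * (2 - μ - 2 * √(1 - κ)) = b * (2 - μ + 2 * √(1 - κ)) := by
  simp_rw [← sub_eq_zero (a := Rbar n κ μ _ _ _), Rbar_scaledPhiV_sub_scaledPhiV_Rbar μ hκ,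
    ← sub_eq_zero (a := a * _)]
  refine ⟨fun h => ?_, fun h X Y Z => by rw [h, zero_mul, zero_smul]⟩
  have : Nonempty (Fin n) := Fin.pos_iff_nonempty.mp hn
  obtain ⟨e, he⟩ := exists_ne (0 : EuclideanSpace ℝ (Fin n))
  have hω : gV n (phiV n (e, 0)) (0, e) = ‖e‖ ^ 2 := by
    simp [gV, phiV]
  have := h (e, 0) (0, e) (e, 0)
  rw [hω, smul_eq_zero] at this
  simpa [he] using this

end

/-- The standard complex structure `J_a(v,w) = (−(1/a)w, av)` is invariant for
the Lie triple system of the base space iff `a²(2−μ−2λ) = 2−μ+2λ`. -/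
theorem standard_complex_structure_invariance (n : ℕ) (hn : 1 ≤ n) (κ μ : ℝ)
    (hκ : κ < 1) (a : ℝ) (ha : 0 < a)
    (J : modelV n → modelV n) (hJ : ∀ X, J X = (-((1 / a) • X.2), a • X.1)) :
    (∀ X Y Z, Rbar n κ μ X Y (J Z) = J (Rbar n κ μ X Y Z)) ↔
      a ^ 2 * (2 - μ - 2 * Real.sqrt (1 - κ)) = 2 - μ + 2 * Real.sqrt (1 - κ) := by
  obtain rfl : J = scaledPhiV n a (1 / a) := funext hJ
  have ha0 : a ≠ 0 := ha.ne'
  rw [Rbar_comm_scaledPhiV_iff μ hn hκ]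
  field_simp
end

section
/- Let n ≥ 1, E = ℝⁿ with standard inner product, V = E × E with inner product g((v,w),(u,z)) = ⟨v,u⟩ + ⟨w,z⟩, and for real κ < 1, μ ∈ ℝ, λ := √(1−κ), define φ(v,w) := (−w, v), h(v,w) := (λv, −λw), and the trilinear map R̄ : V×V×V → V by R̄(X,Y)Z = ((1−μ/2)g(Y,Z)+g(hY,Z))X − ((1−μ/2)g(X,Z)+g(hX,Z))Y + (((1−μ/2)/(1−κ))g(hY,Z)+g(Y,Z))hX − (((1−μ/2)/(1−κ))g(hX,Z)+g(X,Z))hY + ((1−μ/2)g(φY,Z)+g(φhY,Z))φX − ((1−μ/2)g(φX,Z)+g(φhX,Z))φY + (((1−μ/2)/(1−κ))g(φhY,Z)+g(φY,Z))φhX − (((1−μ/2)/(1−κ))g(φhX,Z)+g(φX,Z))φhY + (μ−2)g(φX,Y)φZ − 2g(φX,Y)φhZ. For a > 0 define the linear map I_a on V by I_a(v,w) := ((1/a)w, a·v), so that I_a∘I_a = id. Then R̄(X,Y)(I_a Z) = I_a(R̄(X,Y)Z) holds for all X,Y,Z ∈ V if and only if a²(2 − μ − 2λ) = −(2 − μ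 + 2λ). -/
open scoped RealInnerProductSpace

/-!
Write `λ = √(1 - κ)`, `p = 2 - μ + 2λ` and `q = 2 - μ - 2λ`. Because `λ² = 1 - κ`, the
`1/(1 - κ)` terms of `R̄` recombine with the others, and in the splitting `V = E × E` into the
eigenspaces of `h` the tensor `R̄` takes a block form in which only `p` and `q` survive.
In this form the commutator `R̄(X,Y) ∘ I_a - I_a ∘ R̄(X,Y)` is
`((a²q + p)/a) g(φX, Y)` times the reflection `(z, w) ↦ (z, -w)`, and `g(φX, Y) ≠ 0` for
`X = (e, 0)`, `Y = (0, e)`, `e ≠ 0`.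
-/

section BlockForm

variable {E : Type*} [NormedAddCommGroup E] [InnerProductSpace ℝ E]

noncomputable def paraI (a : ℝ) (X : E × E) : E × E := ((1 / a) • X.2, a • X.1)

theorem paraI_paraI {a : ℝ} (ha : a ≠ 0) (X : E × E) : paraI a (paraI a X) = X := by
  ext <;> simp [paraI, smul_smul, ha]

noncomputable def blockR (p q : ℝ) (X Y Z : E × E) : E × E :=
  ((p * ⟪Y.1, Z.1⟫) • X.1 - (p * ⟪X.1, Z.1⟫) • Y.1 + (q * ⟪Y.2, Z.1⟫) • X.2
      - (q * ⟪X.2, Z.1⟫) • Y.2 + (q * (⟪X.1, Y.2⟫ - ⟪X.2, Y.1⟫)) • Z.2,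
    (q * ⟪Y.2, Z.2⟫) • X.2 - (q * ⟪X.2, Z.2⟫) • Y.2 + (p * ⟪Y.1, Z.2⟫) • X.1
      - (p * ⟪X.1, Z.2⟫) • Y.1 - (p * (⟪X.1, Y.2⟫ - ⟪X.2, Y.1⟫)) • Z.1)

theorem blockR_paraI_sub_paraI_blockR (p q : ℝ) {a : ℝ} (ha : a ≠ 0) (X Y Z : E × E) :
    blockR p q X Y (paraI a Z) - paraI a (blockR p q X Y Z) =
      ((a ^ 2 * q + p) / a * (⟪X.1, Y.2⟫ - ⟪X.2, Y.1⟫)) • (Z.1, -Z.2) := by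
  simp only [blockR, paraI, Prod.mk_sub_mk, Prod.smul_mk, real_inner_smul_right, smul_sub,
    smul_add, smul_smul, Prod.mk.injEq, smul_neg]
  constructor <;> match_scalars <;> field_simp <;> ring

theorem blockR_paraI_comm_iff [Nontrivial E] (p q : ℝ) {a : ℝ} (ha : a ≠ 0) :
    (∀ X Y Z : E × E, blockR p q X Y (paraI a Z) = paraI a (blockR p q X Y Z)) ↔
      a ^ 2 * q + p = 0 := by
  simp_rw [← sub_eq_zero (a := blockR p q _ _ _), blockR_paraI_sub_paraI_blockR p q ha]
  refine ⟨fun h => ?_, fun h X Y Z => by simp [h]⟩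
  obtain ⟨e, he⟩ := exists_ne (0 : E)
  simpa [ha, he] using h (e, 0) (0, e) (e, 0)

end BlockForm

theorem Rbar_eq_blockR {n : ℕ} {κ μ : ℝ} (hκ : κ < 1) :
    Rbar n κ μ = blockR (2 - μ + 2 * Real.sqrt (1 - κ)) (2 - μ - 2 * Real.sqrt (1 - κ)) := by
  obtain ⟨l, hl, rfl⟩ : ∃ l, 0 < l ∧ κ = 1 - l ^ 2 :=
    ⟨Real.sqrt (1 - κ), Real.sqrt_pos.2 (by linarith), by rw [Real.sq_sqrt (by linarith)]; ring⟩
  ext X Y Z : 3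
  refine Prod.ext ?_ ?_ <;>
  · simp only [Rbar, blockR, gV, hV, phiV, sub_sub_cancel, Real.sqrt_sq hl.le, Prod.fst_add,
      Prod.fst_sub, Prod.snd_add, Prod.snd_sub, Prod.smul_fst, Prod.smul_snd, smul_neg,
      inner_neg_left, real_inner_smul_left]
    match_scalars <;> field_simp <;> ring

/-- The standard para-complex structure `I_a(v,w) = ((1/a)w, av)` is invariant
for the Lie triple system of the base space iff `a²(2−μ−2λ) = −(2−μ+2λ)`. -/
theorem standard_paracomplex_structure_invariance (n : ℕ) (hn : 1 ≤ n) (κ μ : ℝ)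
    (hκ : κ < 1) (a : ℝ) (ha : 0 < a)
    (I : modelV n → modelV n) (hI : ∀ X, I X = ((1 / a) • X.2, a • X.1)) :
    (∀ X, I (I X) = X) ∧
    ((∀ X Y Z, Rbar n κ μ X Y (I Z) = I (Rbar n κ μ X Y Z)) ↔
      a ^ 2 * (2 - μ - 2 * Real.sqrt (1 - κ)) =
        -(2 - μ + 2 * Real.sqrt (1 - κ))) := by
  obtain rfl : I = paraI a := funext hI
  refine ⟨paraI_paraI ha.ne', ?_⟩
  have : Nonempty (Fin n) := ⟨⟨0, hn⟩⟩
  rw [Rbar_eq_blockR hκ, blockR_paraI_comm_iff _ _ ha.ne', eq_neg_iff_add_eq_zero]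
end

section
/- Let n ≥ 1, E = ℝⁿ with standard inner product, V = E × E with inner product g((v,w),(u,z)) = ⟨v,u⟩ + ⟨w,z⟩, and for real κ < 1, μ ∈ ℝ, λ := √(1−κ), define φ(v,w) := (−w, v), h(v,w) := (λv, −λw), and the trilinear map R̄ : V×V×V → V by R̄(X,Y)Z = ((1−μ/2)g(Y,Z)+g(hY,Z))X − ((1−μ/2)g(X,Z)+g(hX,Z))Y + (((1−μ/2)/(1−κ))g(hY,Z)+g(Y,Z))hX − (((1−μ/2)/(1−κ))g(hX,Z)+g(X,Z))hY + ((1−μ/2)g(φY,Z)+g(φhY,Z))φX − ((1−μ/2)g(φX,Z)+g(φhX,Z))φY + (((1−μ/2)/(1−κ))g(φhY,Z)+g(φY,Z))φhX − (((1−μ/2)/(1−κ))g(φhX,Z)+g(φX,Z))φhY + (μ−2)g(φX,Y)φZ − 2g(φX,Y)φhZ. Let a > 0 satisfy a²(2 − μ − 2λ) = 2 − μ + 2λ and define J_a(v,w) := (−(1/a)w, a·v). Then R̄(J_a X, Y)Z = −R̄(X, J_a Y)Z for all X, Y, Z ∈ V. -/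
/-!
In the splitting `V = E × E` into the `±λ`-eigenspaces of `h`, every `h` in `R̄` contributes
a factor `±λ`, and in the terms carrying `(1 - μ/2)/(1 - κ)` two such factors cancel
`1 - κ = λ²`. What is left is a tensor in block form with only two coefficients,
`A = 2 - μ + 2λ` on the first factor and `B = 2 - μ - 2λ` on the second. `J_a` scales the
two factors by `a` and `1/a`, so the twisting identity reduces to `a B = A / a`, which is the
invariance condition `a² B = A`.
-/

open scoped RealInnerProductSpace

section BlockForm

variable {E : Type*} [NormedAddCommGroup E] [InnerProductSpace ℝ E]

noncomputable def blockCurvature (A B : ℝ) (X Y Z : E × E) : E × E :=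
  (A • (⟪Y.1, Z.1⟫ • X.1 - ⟪X.1, Z.1⟫ • Y.1) + B • (⟪Y.2, Z.1⟫ • X.2 - ⟪X.2, Z.1⟫ • Y.2)
      + (B * (⟪X.1, Y.2⟫ - ⟪X.2, Y.1⟫)) • Z.2,
    B • (⟪Y.2, Z.2⟫ • X.2 - ⟪X.2, Z.2⟫ • Y.2) + A • (⟪Y.1, Z.2⟫ • X.1 - ⟪X.1, Z.2⟫ • Y.1)
      - (A * (⟪X.1, Y.2⟫ - ⟪X.2, Y.1⟫)) • Z.1)

noncomputable def twistedComplexStructure (a : ℝ) (X : E × E) : E × E :=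
  (-((1 / a) • X.2), a • X.1)

theorem blockCurvature_twistedComplexStructure {A B a : ℝ} (hAB : a ^ 2 * B = A)
    (X Y Z : E × E) :
    blockCurvature A B (twistedComplexStructure a X) Y Z =
      -blockCurvature A B X (twistedComplexStructure a Y) Z := by
  rcases eq_or_ne a 0 with rfl | ha
  · -- `1 / 0 = 0` makes `J₀ = 0`, and `A = 0`
    simp [blockCurvature, twistedComplexStructure, ← hAB]
  subst hAB
  simp only [blockCurvature, twistedComplexStructure, Prod.neg_mk, Prod.mk.injEq,
    inner_neg_left, inner_neg_right, real_inner_smul_left, real_inner_smul_right]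
  constructor <;> match_scalars <;> field_simp <;> ring

end BlockForm

theorem Rbar_eq_blockCurvature {n : ℕ} {κ : ℝ} (hκ : κ < 1) (μ : ℝ) (X Y Z : modelV n) :
    Rbar n κ μ X Y Z =
      blockCurvature (2 - μ + 2 * √(1 - κ)) (2 - μ - 2 * √(1 - κ)) X Y Z := by
  obtain ⟨x₁, x₂⟩ := X
  obtain ⟨y₁, y₂⟩ := Y
  obtain ⟨z₁, z₂⟩ := Z
  simp only [Rbar, blockCurvature, gV, phiV, hV, Prod.smul_mk, Prod.mk_add_mk,
    Prod.mk_sub_mk, Prod.mk.injEq, smul_neg, inner_neg_left, real_inner_smul_left]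
  set l := √(1 - κ)
  have hl : l ^ 2 = 1 - κ := Real.sq_sqrt (by linarith)
  have hl0 : l ≠ 0 := (Real.sqrt_pos.mpr (by linarith)).ne'
  rw [← hl]
  constructor <;> match_scalars <;> field_simp <;> ring

theorem standard_complex_structure_is_twisted_general (n : ℕ) (κ μ : ℝ)
    (hκ : κ < 1) (a : ℝ)
    (hinv : a ^ 2 * (2 - μ - 2 * Real.sqrt (1 - κ)) =
      2 - μ + 2 * Real.sqrt (1 - κ))
    (J : modelV n → modelV n) (hJ : ∀ X, J X = (-((1 / a) • X.2), a • X.1)) :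
    ∀ X Y Z, Rbar n κ μ (J X) Y Z = -(Rbar n κ μ X (J Y) Z) := by
  obtain rfl : J = twistedComplexStructure a := funext hJ
  intro X Y Z
  rw [Rbar_eq_blockCurvature hκ, Rbar_eq_blockCurvature hκ]
  exact blockCurvature_twistedComplexStructure hinv X Y Z

/-- The standard complex structure on the base space is twisted:
`R̄(J_a X, Y)Z = −R̄(X, J_a Y)Z`. -/
theorem standard_complex_structure_is_twisted (n : ℕ) (hn : 1 ≤ n) (κ μ : ℝ)
    (hκ : κ < 1) (a : ℝ) (ha : 0 < a)
    (hinv : a ^ 2 * (2 - μ - 2 * Real.sqrt (1 - κ)) =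
      2 - μ + 2 * Real.sqrt (1 - κ))
    (J : modelV n → modelV n) (hJ : ∀ X, J X = (-((1 / a) • X.2), a • X.1)) :
    ∀ X Y Z, Rbar n κ μ (J X) Y Z = -(Rbar n κ μ X (J Y) Z) :=
  standard_complex_structure_is_twisted_general n κ μ hκ a hinv J hJ
end
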